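/- The BQR loss L(y, z) is convex in z on each of the half-lines [0,∞) and (-∞, 0] for each y ∈ {0,1}, and moreover L(1, ·) is nonincreasing and L(0, ·) is nondecreasing on all of ℝ. -/

import Mathlib

/-!
On `[0, ∞)` we have `1 - p z = τ e^{(τ-1)z}`, and on `(-∞, 0]` we have `p z = (1-τ) e^{τz}`.
So on each half-line one of `L 0 = -log (1 - p)`, `L 1 = -log p` is affine, and the other is
`-log (1 - a e^{cz})` with `a ≥ 0`: a convex nondecreasing function `w ↦ -log (1 - w)` of the
convex function `a e^{cz}`, hence convex. Monotonicity holds because `p` is nondecreasing with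
values in `(0, 1)`.
-/

open Real Set

lemma convexOn_neg_log_one_sub : ConvexOn ℝ (Iio 1) fun w => -log (1 - w) := by
  refine ⟨convex_Iio 1, fun x hx y hy a b ha hb hab => ?_⟩
  have hconc := strictConcaveOn_log_Ioi.concaveOn.2 (sub_pos.2 (mem_Iio.1 hx))
    (sub_pos.2 (mem_Iio.1 hy)) ha hb hab
  have hcomb : a • (1 - x) + b • (1 - y) = 1 - (a • x + b • y) := by
    simp only [smul_eq_mul]; linear_combination hab
  rw [hcomb] at hconc
  simp only [smul_eq_mul] at hconc ⊢
  linarith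

lemma monotoneOn_neg_log_one_sub : MonotoneOn (fun w => -log (1 - w)) (Iio 1) :=
  fun _ _ _ hy hxy => neg_le_neg <| log_le_log (sub_pos.2 (mem_Iio.1 hy)) (by linarith)

lemma convexOn_mul_exp_mul {a : ℝ} (ha : 0 ≤ a) (c : ℝ) :
    ConvexOn ℝ univ fun z => a * exp (c * z) :=
  (convexOn_exp.comp_linearMap (LinearMap.mul ℝ ℝ c)).smul ha

lemma convexOn_neg_log_one_sub_mul_exp {a : ℝ} (ha : 0 ≤ a) (c : ℝ) {s : Set ℝ}
    (hs : Convex ℝ s) (hlt : ∀ z ∈ s, a * exp (c * z) < 1) :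
    ConvexOn ℝ s fun z => -log (1 - a * exp (c * z)) := by
  have himage : (fun z => a * exp (c * z)) '' s ⊆ Iio 1 := by
    rintro _ ⟨z, hz, rfl⟩; exact hlt z hz
  have himage_convex : Convex ℝ ((fun z => a * exp (c * z)) '' s) :=
    convex_iff_isPreconnected.2 (hs.isPreconnected.image _ (by fun_prop))
  exact (convexOn_neg_log_one_sub.subset himage himage_convex).comp
    ((convexOn_mul_exp_mul ha c).subset (subset_univ s) hs)
    (monotoneOn_neg_log_one_sub.mono himage)

lemma convexOn_neg_log_mul_exp {a : ℝ} (ha : 0 < a) (c : ℝ) {s : Set ℝ} (hs : Convex ℝ s) :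
    ConvexOn ℝ s fun z => -log (a * exp (c * z)) := by
  refine ((LinearMap.mul ℝ ℝ (-c)).convexOn hs |>.add (convexOn_const (-log a) hs)).congr ?_
  intro z _
  simp [log_mul ha.ne' (exp_ne_zero _)]

noncomputable def bqrProb (τ z : ℝ) : ℝ :=
  if 0 ≤ z then 1 - τ * exp ((τ - 1) * z) else (1 - τ) * exp (τ * z)

noncomputable def bqrLoss (τ y z : ℝ) : ℝ :=
  -(y * log (bqrProb τ z) + (1 - y) * log (1 - bqrProb τ z))

section

variable {τ z : ℝ}

lemma one_sub_bqrProb_of_nonneg (hz : 0 ≤ z) : 1 - bqrProb τ z = τ * exp ((τ - 1) * z) := by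
  simp [bqrProb, hz]

lemma bqrProb_of_nonpos (hz : z ≤ 0) : bqrProb τ z = (1 - τ) * exp (τ * z) := by
  rcases hz.lt_or_eq with hz | rfl
  · simp [bqrProb, not_le.2 hz]
  · simp [bqrProb]

lemma bqrProb_pos (hτ : τ < 1) (z : ℝ) : 0 < bqrProb τ z := by
  rcases le_or_gt 0 z with hz | hz
  · have hexp : exp ((τ - 1) * z) ≤ 1 := exp_le_one_iff.2 (by nlinarith)
    have := one_sub_bqrProb_of_nonneg (τ := τ) hz
    nlinarith [exp_pos ((τ - 1) * z)]
  · rw [bqrProb_of_nonpos hz.le]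
    have := exp_pos (τ * z)
    nlinarith

lemma bqrProb_lt_one (hτ : 0 < τ) (z : ℝ) : bqrProb τ z < 1 := by
  rcases le_or_gt 0 z with hz | hz
  · have := one_sub_bqrProb_of_nonneg (τ := τ) hz
    have := exp_pos ((τ - 1) * z)
    nlinarith
  · have hexp : exp (τ * z) < 1 := exp_lt_one_iff.2 (by nlinarith)
    rw [bqrProb_of_nonpos hz.le]
    nlinarith [exp_pos (τ * z)]

lemma monotone_bqrProb (h0 : 0 ≤ τ) (h1 : τ ≤ 1) : Monotone (bqrProb τ) := by
  refine MonotoneOn.Iic_union_Ici (a := 0) (fun x hx y hy hxy => ?_) (fun x hx y hy hxy => ?_)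
  · rw [bqrProb_of_nonpos hx, bqrProb_of_nonpos hy]
    have : 0 ≤ 1 - τ := sub_nonneg.2 h1
    gcongr
  · have hx' := one_sub_bqrProb_of_nonneg (τ := τ) hx
    have hy' := one_sub_bqrProb_of_nonneg (τ := τ) hy
    have : τ * exp ((τ - 1) * y) ≤ τ * exp ((τ - 1) * x) := by
      gcongr τ * exp ?_
      exact mul_le_mul_of_nonpos_left hxy (by linarith)
    linarith

lemma bqrLoss_one : bqrLoss τ 1 z = -log (bqrProb τ z) := by
  simp [bqrLoss]

lemma bqrLoss_zero : bqrLoss τ 0 z = -log (1 - bqrProb τ z) := by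
  simp [bqrLoss]

lemma antitone_bqrLoss_one (h0 : 0 ≤ τ) (h1 : τ < 1) : Antitone (bqrLoss τ 1) := by
  intro x y hxy
  simp only [bqrLoss_one, neg_le_neg_iff]
  exact log_le_log (bqrProb_pos h1 x) (monotone_bqrProb h0 h1.le hxy)

lemma monotone_bqrLoss_zero (h0 : 0 < τ) (h1 : τ ≤ 1) : Monotone (bqrLoss τ 0) := by
  intro x y hxy
  simp only [bqrLoss_zero, neg_le_neg_iff]
  exact log_le_log (sub_pos.2 (bqrProb_lt_one h0 y))
    (sub_le_sub_left (monotone_bqrProb h0.le h1 hxy) 1)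

lemma convexOn_bqrLoss_one_Ici (h0 : 0 ≤ τ) (h1 : τ < 1) :
    ConvexOn ℝ (Ici 0) (bqrLoss τ 1) := by
  refine (convexOn_neg_log_one_sub_mul_exp h0 (τ - 1) (convex_Ici 0) fun z hz => ?_).congr
    fun z hz => ?_
  · rw [← one_sub_bqrProb_of_nonneg hz]
    linarith [bqrProb_pos h1 z]
  · beta_reduce
    rw [bqrLoss_one, ← one_sub_bqrProb_of_nonneg hz, sub_sub_cancel]

lemma convexOn_bqrLoss_one_Iic (h1 : τ < 1) : ConvexOn ℝ (Iic 0) (bqrLoss τ 1) :=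
  (convexOn_neg_log_mul_exp (sub_pos.2 h1) τ (convex_Iic 0)).congr fun z hz => by
    rw [bqrLoss_one, bqrProb_of_nonpos hz]

lemma convexOn_bqrLoss_zero_Ici (h0 : 0 < τ) : ConvexOn ℝ (Ici 0) (bqrLoss τ 0) :=
  (convexOn_neg_log_mul_exp h0 (τ - 1) (convex_Ici 0)).congr fun z hz => by
    rw [bqrLoss_zero, one_sub_bqrProb_of_nonneg hz]

lemma convexOn_bqrLoss_zero_Iic (h0 : 0 < τ) (h1 : τ ≤ 1) :
    ConvexOn ℝ (Iic 0) (bqrLoss τ 0) := by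
  refine (convexOn_neg_log_one_sub_mul_exp (sub_nonneg.2 h1) τ (convex_Iic 0)
    fun z hz => ?_).congr fun z hz => ?_
  · rw [← bqrProb_of_nonpos hz]
    exact bqrProb_lt_one h0 z
  · rw [bqrLoss_zero, bqrProb_of_nonpos hz]

end

theorem bqr_loss_convex_monotone (τ : ℝ) (hτ : τ ∈ Set.Ioo (0:ℝ) 1)
    (p : ℝ → ℝ)
    (hp : ∀ z, p z = if 0 ≤ z then 1 - τ * Real.exp ((τ - 1) * z)
                     else (1 - τ) * Real.exp (τ * z))
    (L : ℝ → ℝ → ℝ)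
    (hL : ∀ y z, L y z = -(y * Real.log (p z) + (1 - y) * Real.log (1 - p z))) :
    (∀ y ∈ ({0, 1} : Set ℝ),
      ConvexOn ℝ (Set.Ici (0:ℝ)) (L y) ∧ ConvexOn ℝ (Set.Iic (0:ℝ)) (L y)) ∧
    Antitone (L 1) ∧ Monotone (L 0) := by
  obtain ⟨h0, h1⟩ := hτ
  obtain rfl : p = bqrProb τ := funext hp
  obtain rfl : L = bqrLoss τ := funext₂ hL
  refine ⟨?_, antitone_bqrLoss_one h0.le h1, monotone_bqrLoss_zero h0 h1.le⟩
  rintro y (rfl | rfl)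
  · exact ⟨convexOn_bqrLoss_zero_Ici h0, convexOn_bqrLoss_zero_Iic h0 h1.le⟩
  · exact ⟨convexOn_bqrLoss_one_Ici h0.le h1, convexOn_bqrLoss_one_Iic h1⟩
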